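/- The spectral norm of the Pauli transfer matrix block of an M-qubit reset operation within an N-qubit system equals 2^{M/2}: for E = Γ^{⊗M} ⊗ I^{⊗(N−M)} with Γ the single-qubit reset PTM, the lower-right (4^N−1)×(4^N−1) block E' satisfies σ_max(E') = 2^{M/2} when M < N. -/

import Mathlib

open Matrix BigOperators

/-- The 4×4 Pauli transfer matrix (in the basis I, X, Y, Z) of the
single-qubit complete reset (amplitude damping with γ = 1). -/
noncomputable def resetPTM1 : Matrix (Fin 4) (Fin 4) ℝ :=
  !![1, 0, 0, 0; 0, 0, 0, 0; 0, 0, 0, 0; 1, 0, 0, 0]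

/-- The PTM of the `M`-qubit reset within an `N`-qubit system: the Kronecker
product of `M` copies of `resetPTM1` (on the first `M` qubits) and `N − M`
copies of the 4×4 identity, realized as a matrix indexed by Pauli-string
labels `Fin N → Fin 4`. -/
noncomputable def resetPTM (N M : ℕ) : Matrix (Fin N → Fin 4) (Fin N → Fin 4) ℝ :=
  fun i j => ∏ q : Fin N,
    if (q : ℕ) < M then resetPTM1 (i q) (j q) else (if i q = j q then 1 else 0)

/-- The lower-right `(4^N − 1) × (4^N − 1)` block of `resetPTM N M`, obtained
by deleting the row and column of the identity Pauli string. -/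
noncomputable def resetPTMBlock (N M : ℕ) :
    Matrix {k : Fin N → Fin 4 // k ≠ 0} {k : Fin N → Fin 4 // k ≠ 0} ℝ :=
  fun i j => resetPTM N M i.1 j.1

/-! The reset PTM `E` is a Kronecker product, so `Eᵀ E` is the Kronecker product of the
single-site Gram matrices: `Γᵀ Γ = diag(2, 0, 0, 0)` on the reset qubits and the identity on the
others, hence diagonal with entries in `{0, 2^M}`. The identity row of `E` vanishes outside the
identity column, so deleting it does not change the Gram matrix on the remaining block: `E'ᵀ E'`
is again diagonal, and since `M < N` some non-identity Pauli string is supported off the reset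
qubits and realizes the entry `2^M`. Hence `‖E'‖² = ‖E'ᵀ E'‖ = 2^M`. -/

open scoped Matrix.Norms.L2Operator

namespace Matrix

-- With an unannotated `(↑)` on the right, elaboration picks the `CStarMatrix` multiplication.
theorem submatrix_transpose_mul_submatrix_of_row_eq_zero {R κ ι ν : Type*} [CommSemiring R]
    [Fintype κ] [DecidableEq κ] (A : Matrix κ ι R) (k₀ : κ) (f : ν → ι)
    (h : ∀ j, A k₀ (f j) = 0) :
    (A.submatrix ((↑) : {k // k ≠ k₀} → κ) f)ᵀ * A.submatrix ((↑) : {k // k ≠ k₀} → κ) f =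
      (Aᵀ * A).submatrix f f := by
  ext i j
  simp only [mul_apply, transpose_apply, submatrix_apply]
  rw [Fintype.sum_eq_add_sum_subtype_ne _ k₀, h, zero_mul, zero_add]

variable {R : Type*} [CommSemiring R] {ι : Type*} [Fintype ι] {α β γ : ι → Type*}

def piKronecker (A : ∀ q, Matrix (α q) (β q) R) : Matrix (∀ q, α q) (∀ q, β q) R :=
  of fun i j => ∏ q, A q (i q) (j q)

@[simp]
theorem piKronecker_apply (A : ∀ q, Matrix (α q) (β q) R) (i : ∀ q, α q) (j : ∀ q, β q) :
    piKronecker A i j = ∏ q, A q (i q) (j q) := rfl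

theorem transpose_piKronecker (A : ∀ q, Matrix (α q) (β q) R) :
    (piKronecker A)ᵀ = piKronecker fun q => (A q)ᵀ := rfl

theorem piKronecker_mul [DecidableEq ι] [∀ q, Fintype (β q)] (A : ∀ q, Matrix (α q) (β q) R)
    (B : ∀ q, Matrix (β q) (γ q) R) :
    piKronecker A * piKronecker B = piKronecker fun q => A q * B q := by
  ext i k
  simp only [mul_apply, piKronecker_apply, Fintype.prod_sum, ← Finset.prod_mul_distrib]

theorem piKronecker_diagonal [∀ q, DecidableEq (α q)] (d : ∀ q, α q → R) :
    piKronecker (fun q => diagonal (d q)) = diagonal fun i => ∏ q, d q (i q) := by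
  ext i j
  rw [piKronecker_apply, diagonal_apply]
  split_ifs with hij
  · simp [hij]
  · obtain ⟨q, hq⟩ := Function.ne_iff.mp hij
    exact Finset.prod_eq_zero (Finset.mem_univ q) (diagonal_apply_ne _ hq)

end Matrix

theorem Fin.prod_ite_val_lt {R : Type*} [CommMonoid R] {N M : ℕ} (hM : M ≤ N) (c : R) :
    ∏ q : Fin N, (if (q : ℕ) < M then c else 1) = c ^ M := by
  rw [Finset.prod_ite, Finset.prod_const, Finset.prod_const_one, mul_one, Fin.card_filter_val_lt,
    min_eq_right hM]

theorem resetPTM1_transpose_mul_self :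
    resetPTM1ᵀ * resetPTM1 = diagonal (Pi.single 0 2) := by
  ext a b
  fin_cases a <;> fin_cases b <;>
    simp [resetPTM1, mul_apply, Fin.sum_univ_four, one_add_one_eq_two]

theorem resetPTM_eq_piKronecker (N M : ℕ) :
    resetPTM N M = piKronecker fun q : Fin N => if (q : ℕ) < M then resetPTM1 else 1 := by
  ext i j
  exact Finset.prod_congr rfl fun q _ => by by_cases hq : (q : ℕ) < M <;> simp [hq, one_apply]

noncomputable def resetGram (N M : ℕ) (j : Fin N → Fin 4) : ℝ :=
  ∏ q : Fin N, (if (q : ℕ) < M then Pi.single 0 2 else 1 : Fin 4 → ℝ) (j q)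

theorem resetPTM_transpose_mul_self (N M : ℕ) :
    (resetPTM N M)ᵀ * resetPTM N M = diagonal (resetGram N M) := by
  rw [resetPTM_eq_piKronecker, transpose_piKronecker, piKronecker_mul]
  have hfactor : ∀ q : Fin N, ((if (q : ℕ) < M then resetPTM1 else 1)ᵀ *
      (if (q : ℕ) < M then resetPTM1 else 1)) =
      diagonal (if (q : ℕ) < M then Pi.single 0 2 else 1) := by
    intro q
    split_ifs
    · exact resetPTM1_transpose_mul_self
    · simp
  simp_rw [hfactor, piKronecker_diagonal]
  rfl

theorem resetPTM_zero_apply_of_ne_zero (N M : ℕ) {j : Fin N → Fin 4} (hj : j ≠ 0) :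
    resetPTM N M 0 j = 0 := by
  obtain ⟨q, hq⟩ := Function.ne_iff.mp hj
  refine Finset.prod_eq_zero (Finset.mem_univ q) ?_
  rw [Pi.zero_apply] at hq
  by_cases hqM : (q : ℕ) < M
  · rw [if_pos hqM]
    revert hq; generalize j q = a
    fin_cases a <;> simp [resetPTM1]
  · simp [hqM, Ne.symm hq]

theorem resetPTMBlock_conjTranspose_mul_self (N M : ℕ) :
    (resetPTMBlock N M)ᴴ * resetPTMBlock N M =
      diagonal fun j : {k : Fin N → Fin 4 // k ≠ 0} => resetGram N M j := by
  calc (resetPTMBlock N M)ᴴ * resetPTMBlock N M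
      = ((resetPTM N M)ᵀ * resetPTM N M).submatrix Subtype.val Subtype.val :=
        submatrix_transpose_mul_submatrix_of_row_eq_zero _ 0 _ fun j =>
          resetPTM_zero_apply_of_ne_zero N M j.2
    _ = _ := by rw [resetPTM_transpose_mul_self, submatrix_diagonal _ _ Subtype.val_injective]; rfl

theorem abs_resetGram_le {N M : ℕ} (hM : M ≤ N) (j : Fin N → Fin 4) :
    |resetGram N M j| ≤ 2 ^ M := by
  rw [resetGram, Finset.abs_prod, ← Fin.prod_ite_val_lt hM]
  refine Finset.prod_le_prod (fun _ _ => abs_nonneg _) fun q _ => ?_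
  split_ifs
  · rw [Pi.single_apply]; split_ifs <;> norm_num
  · simp

theorem resetGram_of_forall_lt_eq_zero {N M : ℕ} (hM : M ≤ N) {j : Fin N → Fin 4}
    (hj : ∀ q : Fin N, (q : ℕ) < M → j q = 0) : resetGram N M j = 2 ^ M := by
  rw [resetGram, ← Fin.prod_ite_val_lt hM]
  refine Finset.prod_congr rfl fun q _ => ?_
  split_ifs with hq
  · rw [hj q hq, Pi.single_eq_same]
  · rfl

theorem norm_resetGram_subtype {N M : ℕ} (hM : M < N) :
    ‖fun j : {k : Fin N → Fin 4 // k ≠ 0} => resetGram N M j‖ = 2 ^ M := by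
  refine le_antisymm ((pi_norm_le_iff_of_nonneg (by positivity)).mpr fun j =>
    (abs_resetGram_le hM.le j).trans_eq' (Real.norm_eq_abs _)) ?_
  set j₀ : Fin N → Fin 4 := Pi.single ⟨M, hM⟩ 1
  have hj₀ : j₀ ≠ 0 := fun h => by simpa [j₀] using congrFun h ⟨M, hM⟩
  have hj₀_lt : ∀ q : Fin N, (q : ℕ) < M → j₀ q = 0 := fun q hq =>
    Pi.single_eq_of_ne (fun h => hq.ne (congrArg Fin.val h)) _
  calc (2 : ℝ) ^ M = resetGram N M j₀ := (resetGram_of_forall_lt_eq_zero hM.le hj₀_lt).symm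
    _ ≤ ‖resetGram N M j₀‖ := Real.le_norm_self _
    _ ≤ _ := norm_le_pi_norm (fun j : {k : Fin N → Fin 4 // k ≠ 0} => resetGram N M j) ⟨j₀, hj₀⟩

/-- For `M < N`, the spectral norm of the lower-right block
of the `M`-qubit reset PTM within an `N`-qubit system equals `2^{M/2}`. -/
theorem resetPTM_block_spectral_norm (N M : ℕ) (hM : M < N) :
    ‖(Matrix.toEuclideanCLM (𝕜 := ℝ) (resetPTMBlock N M) :
        EuclideanSpace ℝ {k : Fin N → Fin 4 // k ≠ 0} →L[ℝ]
          EuclideanSpace ℝ {k : Fin N → Fin 4 // k ≠ 0})‖ =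
      (2 : ℝ) ^ ((M : ℝ) / 2) := by
  rw [l2_opNorm_toEuclideanCLM]
  have hsq : ‖resetPTMBlock N M‖ * ‖resetPTMBlock N M‖ = 2 ^ M := by
    rw [← l2_opNorm_conjTranspose_mul_self, resetPTMBlock_conjTranspose_mul_self,
      l2_opNorm_diagonal, norm_resetGram_subtype hM]
  rw [← Real.sqrt_mul_self (norm_nonneg _), hsq, Real.sqrt_eq_rpow, ← Real.rpow_natCast,
    ← Real.rpow_mul zero_le_two, mul_one_div]
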